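/- Let W : GL⁺(2) → ℝ be objective, isotropic and isochoric, and let h : (0,∞) → ℝ be defined by h(t) = W(diag(t,1)). If h is continuously differentiable on (0,∞), then W is polyconvex if and only if h is convex on [1,∞). -/

import Mathlib

open Matrix Set

noncomputable section

/-- The space of real 2×2 matrices. -/
abbrev Mat2 : Type := Matrix (Fin 2) (Fin 2) ℝ

/-- The special orthogonal group SO(2): orthogonal 2×2 matrices with determinant 1. -/
def SO2 : Set Mat2 := {Q : Mat2 | Qᵀ * Q = 1 ∧ Q.det = 1}

/-- A function `W` (viewed on GL⁺(2) = {F | 0 < det F}) is polyconvex if there is a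
convex function `P : ℝ^{2×2} × ℝ → ℝ ∪ {+∞}` with `W F = P (F, det F)` on GL⁺(2). -/
def Polyconvex (W : Mat2 → ℝ) : Prop :=
  ∃ P : Mat2 × ℝ → EReal,
    (∀ x y : Mat2 × ℝ, ∀ a b : ℝ, 0 ≤ a → 0 ≤ b → a + b = 1 →
      P (a • x + b • y) ≤ (a : EReal) * P x + (b : EReal) * P y) ∧
    (∀ F : Mat2, 0 < F.det → (W F : EReal) = P (F, F.det))

/-- Rank-one convexity of `W` on GL⁺(2): convexity along rank-one line segments
lying in GL⁺(2). -/
def RankOneConvex (W : Mat2 → ℝ) : Prop :=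
  ∀ F : Mat2, 0 < F.det → ∀ ξ η : Fin 2 → ℝ, ∀ θ : ℝ, θ ∈ Set.Icc (0:ℝ) 1 →
    (∀ t ∈ Set.Icc (0:ℝ) 1, 0 < (F + t • vecMulVec ξ η).det) →
    W (F + (1 - θ) • vecMulVec ξ η) ≤ θ * W F + (1 - θ) * W (F + vecMulVec ξ η)

/-- Objectivity and isotropy: bi-SO(2)-invariance on GL⁺(2). -/
def ObjectiveIsotropic (W : Mat2 → ℝ) : Prop :=
  ∀ F : Mat2, 0 < F.det → ∀ Q₁ Q₂ : Mat2, Q₁ ∈ SO2 → Q₂ ∈ SO2 →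
    W (Q₁ * F * Q₂) = W F

/-- Isochoric: invariance under positive scaling on GL⁺(2). -/
def Isochoric (W : Mat2 → ℝ) : Prop :=
  ∀ F : Mat2, 0 < F.det → ∀ a : ℝ, 0 < a → W (a • F) = W F

/-- The 2×2 diagonal matrix diag(a, b). -/
def diag2 (a b : ℝ) : Mat2 := !![a, 0; 0, b]

/-- The squared Frobenius norm of a 2×2 matrix. -/
def frobSq (F : Mat2) : ℝ := ∑ i, ∑ j, (F i j) ^ 2

/-- The operator norm of `F` induced by the Euclidean norm on ℝ²:
the supremum of ‖F·x‖ over Euclidean-unit vectors x. -/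
def opNorm2 (F : Mat2) : ℝ :=
  sSup {r : ℝ | ∃ x : Fin 2 → ℝ, (x 0) ^ 2 + (x 1) ^ 2 = 1 ∧
    r = Real.sqrt ((F.mulVec x 0) ^ 2 + (F.mulVec x 1) ^ 2)}

/-!
Restricting a polyconvex representation to the affine curve `t ↦ (diag(t, 1), t)` shows that `h`
is convex. Conversely, invariance gives `h (1 / t) = h t`, so `h' 1 = 0` and the convex `h` is
nondecreasing on `[1, ∞)`. Writing `z, w` for the conformal and anticonformal parts of `F`, every
`F` factors as `R₁ diag(|z| + |w|, |z| - |w|) R₂` with rotations `Rᵢ`, so for `det F > 0`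
`W F = g (λ(F) ^ 2 / det F)` with `λ = |z| + |w|` and `g s = h (max s 1)` convex and monotone.
As `λ` is a sum of norms of linear maps and `x ^ 2 / δ` is jointly convex for `δ > 0`, the
function `(F, δ) ↦ g (λ(F) ^ 2 / δ)`, extended by `⊤` for `δ ≤ 0`, is convex.
-/

def rot (θ : ℝ) : Mat2 := !![Real.cos θ, -Real.sin θ; Real.sin θ, Real.cos θ]

lemma rot_mem_SO2 (θ : ℝ) : rot θ ∈ SO2 := by
  refine ⟨?_, ?_⟩
  · ext i j
    fin_cases i <;> fin_cases j <;> simp [rot, Matrix.mul_apply, Fin.sum_univ_two] <;> ring_nf <;>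
      simp [Real.cos_sq_add_sin_sq, Real.sin_sq_add_cos_sq]
  · simp [rot, Matrix.det_fin_two_of, ← sq, Real.cos_sq_add_sin_sq]

lemma det_diag2 (a b : ℝ) : (diag2 a b).det = a * b := by
  simp [diag2, Matrix.det_fin_two_of]

lemma smul_diag2_add_smul_diag2 (a b x₁ y₁ x₂ y₂ : ℝ) :
    a • diag2 x₁ y₁ + b • diag2 x₂ y₂ = diag2 (a * x₁ + b * x₂) (a * y₁ + b * y₂) := by
  ext i j
  fin_cases i <;> fin_cases j <;> simp [diag2]

lemma ObjectiveIsotropic.apply_diag2_swap {W : Mat2 → ℝ} (hW : ObjectiveIsotropic W) {a b : ℝ}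
    (hab : 0 < a * b) : W (diag2 b a) = W (diag2 a b) := by
  have hswap : rot (Real.pi / 2) * diag2 a b * rot (-(Real.pi / 2)) = diag2 b a := by
    ext i j
    fin_cases i <;> fin_cases j <;> simp [rot, diag2, Matrix.mul_apply, Fin.sum_univ_two]
  rw [← hswap]
  exact hW _ (by rwa [det_diag2]) _ _ (rot_mem_SO2 _) (rot_mem_SO2 _)

lemma Isochoric.apply_diag2 {W : Mat2 → ℝ} (hW : Isochoric W) {a b : ℝ} (ha : 0 < a) (hb : 0 < b) :
    W (diag2 a b) = W (diag2 (a / b) 1) := by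
  have hscale : b • diag2 (a / b) 1 = diag2 a b := by
    ext i j
    fin_cases i <;> fin_cases j <;> simp [diag2, mul_div_cancel₀ _ hb.ne']
  rw [← hscale]
  exact hW _ (by rw [det_diag2]; positivity) b hb

lemma ObjectiveIsotropic.apply_diag2_inv {W : Mat2 → ℝ} (hOI : ObjectiveIsotropic W)
    (hIso : Isochoric W) {t : ℝ} (ht : 0 < t) : W (diag2 t⁻¹ 1) = W (diag2 t 1) := by
  rw [← hOI.apply_diag2_swap (a := t) (b := 1) (by positivity), hIso.apply_diag2 one_pos ht,
    one_div]

/-- Identifying `ℝ²` with `ℂ`, `F v = conformalPart F * v + anticonformalPart F * conj v`. -/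
def conformalPart : Mat2 →ₗ[ℝ] ℂ where
  toFun F := ⟨(F 0 0 + F 1 1) / 2, (F 1 0 - F 0 1) / 2⟩
  map_add' F G := by apply Complex.ext <;> simp <;> ring
  map_smul' c F := by apply Complex.ext <;> simp <;> ring

def anticonformalPart : Mat2 →ₗ[ℝ] ℂ where
  toFun F := ⟨(F 0 0 - F 1 1) / 2, (F 1 0 + F 0 1) / 2⟩
  map_add' F G := by apply Complex.ext <;> simp <;> ring
  map_smul' c F := by apply Complex.ext <;> simp <;> ring

lemma det_eq_sq_norm_conformalPart_sub (F : Mat2) :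
    F.det = ‖conformalPart F‖ ^ 2 - ‖anticonformalPart F‖ ^ 2 := by
  simp [conformalPart, anticonformalPart, Complex.sq_norm, Complex.normSq_mk, Matrix.det_fin_two]
  ring

lemma ext_conformalPart {F G : Mat2} (h₁ : conformalPart F = conformalPart G)
    (h₂ : anticonformalPart F = anticonformalPart G) : F = G := by
  simp only [conformalPart, anticonformalPart, LinearMap.coe_mk, AddHom.coe_mk,
    Complex.ext_iff] at h₁ h₂
  ext i j
  fin_cases i <;> fin_cases j <;> simp <;> linarith [h₁.1, h₁.2, h₂.1, h₂.2]

lemma conformalPart_rot_mul_diag2_mul_rot (r s φ ψ : ℝ) :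
    conformalPart (rot ((φ + ψ) / 2) * diag2 (r + s) (r - s) * rot ((φ - ψ) / 2))
      = r * Complex.exp (φ * Complex.I) := by
  have hφ : φ = (φ + ψ) / 2 + (φ - ψ) / 2 := by ring
  apply Complex.ext <;>
  · simp [conformalPart, rot, diag2]
    conv_rhs => rw [hφ]
    simp only [Real.cos_add, Real.sin_add]
    ring

lemma anticonformalPart_rot_mul_diag2_mul_rot (r s φ ψ : ℝ) :
    anticonformalPart (rot ((φ + ψ) / 2) * diag2 (r + s) (r - s) * rot ((φ - ψ) / 2))
      = s * Complex.exp (ψ * Complex.I) := by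
  have hψ : ψ = (φ + ψ) / 2 - (φ - ψ) / 2 := by ring
  apply Complex.ext <;>
  · simp [anticonformalPart, rot, diag2]
    conv_rhs => rw [hψ]
    simp only [Real.cos_sub, Real.sin_sub]
    ring

theorem exists_eq_rot_mul_diag2_mul_rot (F : Mat2) : ∃ α β : ℝ,
    F = rot α * diag2 (‖conformalPart F‖ + ‖anticonformalPart F‖)
      (‖conformalPart F‖ - ‖anticonformalPart F‖) * rot β := by
  set z := conformalPart F
  set w := anticonformalPart F
  refine ⟨(z.arg + w.arg) / 2, (z.arg - w.arg) / 2, ext_conformalPart ?_ ?_⟩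
  · rw [conformalPart_rot_mul_diag2_mul_rot, Complex.norm_mul_exp_arg_mul_I]
  · rw [anticonformalPart_rot_mul_diag2_mul_rot, Complex.norm_mul_exp_arg_mul_I]

def maxSingularValue (F : Mat2) : ℝ := ‖conformalPart F‖ + ‖anticonformalPart F‖

lemma maxSingularValue_nonneg (F : Mat2) : 0 ≤ maxSingularValue F := by
  unfold maxSingularValue; positivity

lemma convexOn_maxSingularValue : ConvexOn ℝ univ maxSingularValue :=
  ((convexOn_norm convex_univ).comp_linearMap conformalPart).add
    ((convexOn_norm convex_univ).comp_linearMap anticonformalPart)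

lemma det_le_sq_maxSingularValue (F : Mat2) : F.det ≤ maxSingularValue F ^ 2 := by
  rw [det_eq_sq_norm_conformalPart_sub, maxSingularValue]
  nlinarith [norm_nonneg (conformalPart F), norm_nonneg (anticonformalPart F)]

theorem ObjectiveIsotropic.apply_eq_apply_diag2 {W : Mat2 → ℝ} (hOI : ObjectiveIsotropic W)
    (hIso : Isochoric W) {F : Mat2} (hF : 0 < F.det) :
    W F = W (diag2 (maxSingularValue F ^ 2 / F.det) 1) := by
  obtain ⟨α, β, hFeq⟩ := exists_eq_rot_mul_diag2_mul_rot F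
  set r := ‖conformalPart F‖
  set s := ‖anticonformalPart F‖
  have hdet : F.det = (r + s) * (r - s) := by
    rw [det_eq_sq_norm_conformalPart_sub]; ring
  have hsum : 0 < r + s := by
    nlinarith [norm_nonneg (conformalPart F), norm_nonneg (anticonformalPart F)]
  have hdiff : 0 < r - s := by nlinarith
  calc W F = W (diag2 (r + s) (r - s)) := by
        rw [hFeq]
        exact hOI _ (by rw [det_diag2]; positivity) _ _ (rot_mem_SO2 α) (rot_mem_SO2 β)
    _ = W (diag2 ((r + s) / (r - s)) 1) := hIso.apply_diag2 hsum hdiff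
    _ = W (diag2 ((r + s) ^ 2 / F.det) 1) := by rw [hdet, sq, mul_div_mul_left _ _ hsum.ne']

lemma sq_add_div_le {a b x₁ x₂ d₁ d₂ : ℝ} (ha : 0 ≤ a) (hb : 0 ≤ b) (hab : a + b = 1)
    (hd₁ : 0 < d₁) (hd₂ : 0 < d₂) :
    (a * x₁ + b * x₂) ^ 2 / (a * d₁ + b * d₂) ≤ a * (x₁ ^ 2 / d₁) + b * (x₂ ^ 2 / d₂) := by
  have hD : 0 < a * d₁ + b * d₂ := by
    rcases ha.eq_or_lt with rfl | ha
    · simp_all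
    · positivity
  have key : (a * d₁ + b * d₂) * (a * (x₁ ^ 2 / d₁) + b * (x₂ ^ 2 / d₂)) - (a * x₁ + b * x₂) ^ 2
      = a * b * d₁ * d₂ * (x₁ / d₁ - x₂ / d₂) ^ 2 := by
    field_simp
    ring
  rw [div_le_iff₀ hD]
  nlinarith [show 0 ≤ a * b * d₁ * d₂ * (x₁ / d₁ - x₂ / d₂) ^ 2 by positivity]

theorem ConvexOn.sq_div {E : Type*} [AddCommGroup E] [Module ℝ E] {s : Set E} {f : E → ℝ}
    (hf : ConvexOn ℝ s f) (hf₀ : ∀ x ∈ s, 0 ≤ f x) :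
    ConvexOn ℝ (s ×ˢ Ioi 0) (fun p => f p.1 ^ 2 / p.2) := by
  refine ⟨hf.1.prod (convex_Ioi 0), ?_⟩
  rintro ⟨x₁, d₁⟩ ⟨hx₁, hd₁⟩ ⟨x₂, d₂⟩ ⟨hx₂, hd₂⟩ a b ha hb hab
  simp only [Prod.smul_mk, Prod.mk_add_mk, smul_eq_mul] at hd₁ hd₂ ⊢
  have hD : 0 < a * d₁ + b * d₂ := (convex_Ioi 0) hd₁ hd₂ ha hb hab
  calc f (a • x₁ + b • x₂) ^ 2 / (a * d₁ + b * d₂)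
      ≤ (a * f x₁ + b * f x₂) ^ 2 / (a * d₁ + b * d₂) := by
        gcongr
        · exact hf₀ _ (hf.1 hx₁ hx₂ ha hb hab)
        · exact hf.2 hx₁ hx₂ ha hb hab
    _ ≤ a * (f x₁ ^ 2 / d₁) + b * (f x₂ ^ 2 / d₂) := sq_add_div_le ha hb hab hd₁ hd₂

theorem ConvexOn.comp_of_monotone {E : Type*} [AddCommGroup E] [Module ℝ E] {s : Set E}
    {f : E → ℝ} {g : ℝ → ℝ} (hg : ConvexOn ℝ univ g) (hg_mono : Monotone g)
    (hf : ConvexOn ℝ s f) : ConvexOn ℝ s (g ∘ f) :=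
  ⟨hf.1, fun _ hx _ hy _ _ ha hb hab =>
    (hg_mono (hf.2 hx hy ha hb hab)).trans (hg.2 trivial trivial ha hb hab)⟩

theorem ConvexOn.comp_max_const {f : ℝ → ℝ} {c : ℝ} (hf : ConvexOn ℝ (Ici c) f)
    (hf_mono : MonotoneOn f (Ici c)) : ConvexOn ℝ univ (fun x => f (max x c)) := by
  refine ⟨convex_univ, fun x _ y _ a b ha hb hab => ?_⟩
  have hmax : max (a • x + b • y) c ≤ a • max x c + b • max y c :=
    (convexOn_id convex_univ).sup (convexOn_const c convex_univ) |>.2 trivial trivial ha hb hab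
  exact (hf_mono (le_max_right (a • x + b • y) c)
    ((convex_Ici c) (le_max_right x c) (le_max_right y c) ha hb hab) hmax).trans
    (hf.2 (le_max_right x c) (le_max_right y c) ha hb hab)

lemma MonotoneOn.comp_max_const {f : ℝ → ℝ} {c : ℝ} (hf : MonotoneOn f (Ici c)) :
    Monotone (fun x => f (max x c)) :=
  fun x y hxy => hf (le_max_right x c) (le_max_right y c) (max_le_max_right c hxy)

theorem ConvexOn.monotoneOn_of_hasDerivWithinAt_Ioi {f : ℝ → ℝ} {c f' : ℝ}
    (hf : ConvexOn ℝ (Ici c) f) (hd : HasDerivWithinAt f f' (Ioi c) c) (hf' : 0 ≤ f') :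
    MonotoneOn f (Ici c) := by
  intro x (hx : c ≤ x) y (hy : c ≤ y) hxy
  rcases hxy.eq_or_lt with rfl | hxy
  · rfl
  have hcy : 0 ≤ slope f c y :=
    hf'.trans (hf.le_slope_of_hasDerivWithinAt_Ioi self_mem_Ici hy (hx.trans_lt hxy) hd)
  have hxy' : slope f c y ≤ slope f x y := by
    rcases hx.eq_or_lt with rfl | hcx
    · rfl
    rw [slope_comm f c, slope_comm f x]
    exact hf.slope_mono hy ⟨self_mem_Ici, (hcx.trans hxy).ne⟩ ⟨hx, hxy.ne⟩ hcx.le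
  have := hcy.trans hxy'
  rw [slope_def_field, le_div_iff₀ (sub_pos.2 hxy)] at this
  linarith

theorem hasDerivAt_zero_of_comp_inv_eventuallyEq {f : ℝ → ℝ} (hf : DifferentiableAt ℝ f 1)
    (hsym : (fun t => f t⁻¹) =ᶠ[nhds 1] f) : HasDerivAt f 0 1 := by
  have hinv : HasDerivAt (fun t : ℝ => t⁻¹) (-1) 1 := by
    simpa using hasDerivAt_inv (one_ne_zero : (1 : ℝ) ≠ 0)
  have hf' : HasDerivAt f (deriv f 1) (1 : ℝ)⁻¹ := by rw [inv_one]; exact hf.hasDerivAt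
  have hcomp : HasDerivAt f (deriv f 1 * -1) 1 :=
    (hf'.comp 1 hinv).congr_of_eventuallyEq hsym.symm
  have hzero : deriv f 1 = 0 := by linarith [hcomp.unique hf.hasDerivAt]
  exact hzero ▸ hf.hasDerivAt

theorem ConvexOn.ite_top_le {E : Type*} [AddCommGroup E] [Module ℝ E] {s : Set E}
    [DecidablePred (· ∈ s)] {f : E → ℝ}
    (hf : ConvexOn ℝ s f) (x y : E) {a b : ℝ} (ha : 0 ≤ a) (hb : 0 ≤ b) (hab : a + b = 1) :
    (if a • x + b • y ∈ s then (f (a • x + b • y) : EReal) else ⊤) ≤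
      (a : EReal) * (if x ∈ s then (f x : EReal) else ⊤) +
        (b : EReal) * (if y ∈ s then (f y : EReal) else ⊤) := by
  rcases ha.eq_or_lt with rfl | ha
  · simp [show b = 1 by linarith]
  rcases hb.eq_or_lt with rfl | hb
  · simp [show a = 1 by linarith]
  by_cases hx : x ∈ s
  · by_cases hy : y ∈ s
    · rw [if_pos (hf.1 hx hy ha.le hb.le hab), if_pos hx, if_pos hy]
      exact_mod_cast hf.2 hx hy ha.le hb.le hab
    · rw [if_neg hy, if_pos hx, EReal.coe_mul_top_of_pos hb, ← EReal.coe_mul,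
        EReal.add_top_of_ne_bot (EReal.coe_ne_bot _)]
      exact le_top
  · have hy : (b : EReal) * (if y ∈ s then (f y : EReal) else ⊤) ≠ ⊥ := by
      split_ifs <;> simp [← EReal.coe_mul, EReal.coe_mul_top_of_pos hb]
    rw [if_neg hx, EReal.coe_mul_top_of_pos ha, EReal.top_add_of_ne_bot hy]
    exact le_top

theorem polyconvex_of_convexOn {W : Mat2 → ℝ} {Φ : Mat2 × ℝ → ℝ}
    (hΦ : ConvexOn ℝ (univ ×ˢ Ioi 0) Φ) (hW : ∀ F : Mat2, 0 < F.det → W F = Φ (F, F.det)) :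
    Polyconvex W := by
  classical
  refine ⟨fun p => if p ∈ univ ×ˢ Ioi 0 then (Φ p : EReal) else ⊤,
    fun x y a b ha hb hab => hΦ.ite_top_le x y ha hb hab, fun F hF => ?_⟩
  have hmem : (F, F.det) ∈ univ ×ˢ Ioi (0 : ℝ) := ⟨mem_univ F, hF⟩
  simp only [if_pos hmem, hW F hF]

theorem Polyconvex.convexOn_diag2 {W : Mat2 → ℝ} (hW : Polyconvex W) :
    ConvexOn ℝ (Ioi 0) (fun t => W (diag2 t 1)) := by
  obtain ⟨P, hP, hWP⟩ := hW
  have hWP' : ∀ t, 0 < t → (W (diag2 t 1) : EReal) = P (diag2 t 1, t) := fun t ht => by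
    simpa [det_diag2] using hWP (diag2 t 1) (by rwa [det_diag2, mul_one])
  refine ⟨convex_Ioi 0, fun x hx y hy a b ha hb hab => ?_⟩
  have hcomb : a • (diag2 x 1, x) + b • (diag2 y 1, y) =
      (diag2 (a • x + b • y) 1, a • x + b • y) := by
    simp [smul_diag2_add_smul_diag2, hab]
  have := hP (diag2 x 1, x) (diag2 y 1, y) a b ha hb hab
  rw [hcomb, ← hWP' x hx, ← hWP' y hy, ← hWP' _ ((convex_Ioi 0) hx hy ha hb hab)] at this
  exact_mod_cast this

/-- for objective, isotropic, isochoric `W` with `h(t) = W(diag(t,1))`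
continuously differentiable on `(0,∞)`, polyconvexity of `W` is equivalent to
convexity of `h` on `[1,∞)`. -/
theorem isochoric_polyconvex_iff_convexOn_Ici (W : Mat2 → ℝ)
    (hOI : ObjectiveIsotropic W) (hIso : Isochoric W)
    (hC1 : ContDiffOn ℝ 1 (fun t => W (diag2 t 1)) (Set.Ioi (0:ℝ))) :
    Polyconvex W ↔ ConvexOn ℝ (Set.Ici (1:ℝ)) (fun t => W (diag2 t 1)) := by
  constructor
  · exact fun hW => hW.convexOn_diag2.subset (fun t (ht : 1 ≤ t) => one_pos.trans_le ht)
      (convex_Ici 1)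
  intro hconv
  set h := fun t => W (diag2 t 1)
  have hsym : (fun t => h t⁻¹) =ᶠ[nhds 1] h := by
    filter_upwards [Ioi_mem_nhds one_pos] with t ht using hOI.apply_diag2_inv hIso ht
  have hderiv : HasDerivAt h 0 1 := hasDerivAt_zero_of_comp_inv_eventuallyEq
    ((hC1.differentiableOn one_ne_zero).differentiableAt (Ioi_mem_nhds one_pos)) hsym
  have hmono : MonotoneOn h (Ici 1) :=
    hconv.monotoneOn_of_hasDerivWithinAt_Ioi hderiv.hasDerivWithinAt le_rfl
  refine polyconvex_of_convexOn ((hconv.comp_max_const hmono).comp_of_monotone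
    hmono.comp_max_const (convexOn_maxSingularValue.sq_div fun F _ => maxSingularValue_nonneg F))
    fun F hF => ?_
  change W F = h (max (maxSingularValue F ^ 2 / F.det) 1)
  rw [max_eq_left ((one_le_div hF).2 (det_le_sq_maxSingularValue F)),
    hOI.apply_eq_apply_diag2 hIso hF]
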